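/- Let u, v, ξ ∈ ℂⁿ (n ≥ 2), α ≥ 0, and 1 ≤ p ≤ ∞. If v has pairwise distinct coordinates and |uᵢ - ξᵢ| ≤ α |vᵢ - ξᵢ| for all i, then for all i ≠ j, |uⱼ - vᵢ| ≥ (1 - (1 + α) ‖(v - ξ)/d(v)‖_p) |vᵢ - vⱼ|. -/

import Mathlib

open scoped ENNReal

noncomputable def pnorm (p : ℝ≥0∞) {n : ℕ} (w : Fin n → ℝ) : ℝ :=
  ‖(WithLp.equiv p (Fin n → ℝ)).symm w‖

noncomputable def dmin {n : ℕ} (v : Fin n → ℂ) (i : Fin n) : ℝ :=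
  ⨅ j : {j : Fin n // j ≠ i}, ‖v i - v j.1‖

/-! The argument is two triangle inequalities. Since `dⱼ(v) ≤ |vᵢ - vⱼ|` and every coordinate of
`(v - ξ)/d(v)` is bounded by its `ℓᵖ` norm `N`, we get
`|uⱼ - vⱼ| ≤ |uⱼ - ξⱼ| + |ξⱼ - vⱼ| ≤ (1 + α) |vⱼ - ξⱼ| ≤ (1 + α) N |vᵢ - vⱼ|`,
and then `|vᵢ - vⱼ| ≤ |uⱼ - vᵢ| + |uⱼ - vⱼ|` gives the claim. -/

lemma abs_le_pnorm {n : ℕ} {p : ℝ≥0∞} (hp : 1 ≤ p) (w : Fin n → ℝ) (k : Fin n) :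
    |w k| ≤ pnorm p w :=
  haveI : Fact (1 ≤ p) := ⟨hp⟩
  PiLp.norm_apply_le ((WithLp.equiv p (Fin n → ℝ)).symm w) k

lemma dmin_le_norm_sub {n : ℕ} (v : Fin n → ℂ) {i j : Fin n} (hij : j ≠ i) :
    dmin v i ≤ ‖v i - v j‖ :=
  ciInf_le (Set.finite_range _).bddBelow (⟨j, hij⟩ : {j : Fin n // j ≠ i})

lemma dmin_pos {n : ℕ} {v : Fin n → ℂ} (hv : Function.Injective v) {i j : Fin n}
    (hij : j ≠ i) : 0 < dmin v i := by
  have : Nonempty {j : Fin n // j ≠ i} := ⟨⟨j, hij⟩⟩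
  obtain ⟨k, hk⟩ := exists_eq_ciInf_of_finite (f := fun k : {j : Fin n // j ≠ i} => ‖v i - v k.1‖)
  rw [dmin, ← hk]
  exact norm_pos_iff.mpr (sub_ne_zero.mpr fun h => k.2 (hv h).symm)

lemma norm_sub_le_pnorm_mul_dmin {n : ℕ} {p : ℝ≥0∞} (hp : 1 ≤ p) {v : Fin n → ℂ}
    (hv : Function.Injective v) (ξ : Fin n → ℂ) {i j : Fin n} (hij : i ≠ j) :
    ‖v j - ξ j‖ ≤ pnorm p (fun k => ‖v k - ξ k‖ / dmin v k) * dmin v j := by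
  have hd : 0 < dmin v j := dmin_pos hv hij
  have hcoord := abs_le_pnorm hp (fun k => ‖v k - ξ k‖ / dmin v k) j
  rwa [abs_of_nonneg (by positivity), div_le_iff₀ hd] at hcoord

lemma norm_sub_le_one_add_mul {E : Type*} [SeminormedAddCommGroup E] {u v ξ : E} {α : ℝ}
    (h : ‖u - ξ‖ ≤ α * ‖v - ξ‖) : ‖u - v‖ ≤ (1 + α) * ‖v - ξ‖ := by
  have := norm_sub_le_norm_sub_add_norm_sub u ξ v
  rw [norm_sub_rev ξ v] at this
  linarith

lemma one_sub_mul_norm_sub_le {E : Type*} [SeminormedAddCommGroup E] {a b c : E} {t : ℝ}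
    (h : ‖c - b‖ ≤ t * ‖a - b‖) : (1 - t) * ‖a - b‖ ≤ ‖c - a‖ := by
  have := norm_sub_le_norm_sub_add_norm_sub a c b
  rw [norm_sub_rev a c] at this
  linarith

theorem u_v_xi_alpha_inequality_general (n : ℕ) (u v ξ : Fin n → ℂ)
    (α : ℝ) (hα : 0 ≤ α) (hv : Function.Injective v) (p : ℝ≥0∞) (hp : 1 ≤ p)
    (hu : ∀ i, ‖u i - ξ i‖ ≤ α * ‖v i - ξ i‖) :
    ∀ i j : Fin n, i ≠ j →
      (1 - (1 + α) * pnorm p (fun k => ‖v k - ξ k‖ / dmin v k))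
          * ‖v i - v j‖
        ≤ ‖u j - v i‖ := by
  intro i j hij
  set N := pnorm p (fun k => ‖v k - ξ k‖ / dmin v k)
  have hN : 0 ≤ N := (abs_nonneg _).trans (abs_le_pnorm hp _ j)
  refine one_sub_mul_norm_sub_le ?_
  calc ‖u j - v j‖ ≤ (1 + α) * ‖v j - ξ j‖ := norm_sub_le_one_add_mul (hu j)
    _ ≤ (1 + α) * (N * dmin v j) := by gcongr; exact norm_sub_le_pnorm_mul_dmin hp hv ξ hij
    _ ≤ (1 + α) * (N * ‖v i - v j‖) := by
        gcongr
        rw [norm_sub_rev]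
        exact dmin_le_norm_sub v hij
    _ = (1 + α) * N * ‖v i - v j‖ := by ring

theorem u_v_xi_alpha_inequality (n : ℕ) (hn : 2 ≤ n) (u v ξ : Fin n → ℂ)
    (α : ℝ) (hα : 0 ≤ α) (hv : Function.Injective v) (p : ℝ≥0∞) (hp : 1 ≤ p)
    (hu : ∀ i, ‖u i - ξ i‖ ≤ α * ‖v i - ξ i‖) :
    ∀ i j : Fin n, i ≠ j →
      (1 - (1 + α) * pnorm p (fun k => ‖v k - ξ k‖ / dmin v k))
          * ‖v i - v j‖
        ≤ ‖u j - v i‖ :=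
  u_v_xi_alpha_inequality_general n u v ξ α hα hv p hp hu
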